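/- arXiv:2501.08624 — 5 statements merged into one kernel-verified Lean document; each statement's English description precedes it below -/
import Mathlib

section
/- Two sequences of elements in a commutative ring that generate the same ideal and have the same length, where one is obtained from the other by elementary substitutions of the form g_i = f_i - x_i·s^{d_i} together with s (i.e., the ideals (f_0, ..., f_n, s) and (f_0 - x_0·s^{d_0}, ..., f_n - x_n·s^{d_n}, s) agree in A[s, x_0, ..., x_n]): if the first sequence is Koszul-regular then so is the second. -/
/-- A sequence `f 0, ..., f (m-1)` in a commutative ring `R` is *Koszul-regular* if the
Koszul complex `K_•(f; R)` has vanishing homology in all positive degrees. -/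
def IsKoszulRegular {R : Type*} [CommRing R] {m : ℕ} (f : Fin m → R) : Prop :=
  ∀ p : ℕ, 0 < p → ∀ x ∈ ⋀[R]^p (Fin m → R),
    CliffordAlgebra.contractLeft ((Pi.basisFun R (Fin m)).constr R f) x = 0 →
      ∃ y ∈ ⋀[R]^(p + 1) (Fin m → R),
        CliffordAlgebra.contractLeft ((Pi.basisFun R (Fin m)).constr R f) y = x

section Aux

variable {R : Type*} [CommRing R] {M : Type*} [AddCommGroup M] [Module R M]

lemma contractLeft_map_aux (u : M →ₗ[R] M) (d : Module.Dual R M) (x : ExteriorAlgebra R M) :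
    CliffordAlgebra.contractLeft d (ExteriorAlgebra.map u x)
      = ExteriorAlgebra.map u (CliffordAlgebra.contractLeft (d ∘ₗ u) x) := by
  induction x using CliffordAlgebra.left_induction with
  | algebraMap r =>
      rw [AlgHom.commutes, CliffordAlgebra.contractLeft_algebraMap,
        CliffordAlgebra.contractLeft_algebraMap, map_zero]
  | add x y hx hy => simp only [map_add, hx, hy]
  | ι_mul m x hx =>
      rw [map_mul, ExteriorAlgebra.map_apply_ι, CliffordAlgebra.contractLeft_ι_mul,
        CliffordAlgebra.contractLeft_ι_mul, map_sub, map_smul, map_mul,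
        ExteriorAlgebra.map_apply_ι, hx]
      rfl

lemma map_mem_exteriorPower (u : M →ₗ[R] M) {p : ℕ} {x : ExteriorAlgebra R M}
    (hx : x ∈ ⋀[R]^p M) : ExteriorAlgebra.map u x ∈ ⋀[R]^p M := by
  rw [← ExteriorAlgebra.ιMulti_span_fixedDegree] at hx ⊢
  induction hx using Submodule.span_induction with
  | mem z hz =>
      obtain ⟨m, rfl⟩ := hz
      rw [ExteriorAlgebra.map_apply_ιMulti]
      exact Submodule.subset_span ⟨u ∘ m, rfl⟩
  | zero => rw [map_zero]; exact Submodule.zero_mem _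
  | add a b _ _ ha hb => rw [map_add]; exact Submodule.add_mem _ ha hb
  | smul r a _ ha => rw [map_smul]; exact Submodule.smul_mem _ r ha

/-- Koszul regularity transfers along an invertible change of the sequence. -/
lemma isKoszulRegular_of_comp {m : ℕ} (F G : Fin m → R)
    (u v : (Fin m → R) →ₗ[R] (Fin m → R))
    (huv : u ∘ₗ v = LinearMap.id) (hvu : v ∘ₗ u = LinearMap.id)
    (hFG : (Pi.basisFun R (Fin m)).constr R G
      = ((Pi.basisFun R (Fin m)).constr R F) ∘ₗ u)
    (hreg : IsKoszulRegular F) : IsKoszulRegular G := by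
  intro p hp x hx hcx
  set lF := (Pi.basisFun R (Fin m)).constr R F
  have h1 : CliffordAlgebra.contractLeft lF (ExteriorAlgebra.map u x) = 0 := by
    rw [contractLeft_map_aux, ← hFG, hcx, map_zero]
  obtain ⟨y, hy, hyx⟩ := hreg p hp (ExteriorAlgebra.map u x) (map_mem_exteriorPower u hx) h1
  refine ⟨ExteriorAlgebra.map v y, map_mem_exteriorPower v hy, ?_⟩
  rw [hFG, contractLeft_map_aux, LinearMap.comp_assoc, huv, LinearMap.comp_id, hyx,
    ← AlgHom.comp_apply, ExteriorAlgebra.map_comp_map, hvu, ExteriorAlgebra.map_id,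
    AlgHom.id_apply]

end Aux

open MvPolynomial in
/-- In `R = A[s, x_0, ..., x_n]` (realized as
`MvPolynomial (Option (Fin (n+1))) A` with `X none = s`, `X (some i) = x_i`), the two
sequences `f_0, ..., f_n, s` and `f_0 - x_0·s^{d_0}, ..., f_n - x_n·s^{d_n}, s` generate
the same ideal; if the first is Koszul-regular then so is the second. -/
theorem koszulRegular_of_substituted_generators {A : Type*} [CommRing A] {n : ℕ}
    (f : Fin (n + 1) → A) (d : Fin (n + 1) → ℕ) (hd : ∀ i, 0 < d i)
    (hIdeal :
      Ideal.span
          (Set.range (Fin.snoc (fun i : Fin (n + 1) =>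
              (C (f i) : MvPolynomial (Option (Fin (n + 1))) A)) (X Option.none) :
            Fin (n + 2) → MvPolynomial (Option (Fin (n + 1))) A)) =
        Ideal.span
          (Set.range (Fin.snoc (fun i : Fin (n + 1) =>
              (C (f i) - X (Option.some i) * X Option.none ^ d i :
                MvPolynomial (Option (Fin (n + 1))) A)) (X Option.none) :
            Fin (n + 2) → MvPolynomial (Option (Fin (n + 1))) A)))
    (hreg : IsKoszulRegular
      (Fin.snoc (fun i : Fin (n + 1) =>
          (C (f i) : MvPolynomial (Option (Fin (n + 1))) A)) (X Option.none) :
        Fin (n + 2) → MvPolynomial (Option (Fin (n + 1))) A)) :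
    IsKoszulRegular
      (Fin.snoc (fun i : Fin (n + 1) =>
          (C (f i) - X (Option.some i) * X Option.none ^ d i :
            MvPolynomial (Option (Fin (n + 1))) A)) (X Option.none) :
        Fin (n + 2) → MvPolynomial (Option (Fin (n + 1))) A) := by
  set R' := MvPolynomial (Option (Fin (n + 1))) A
  set F : Fin (n + 2) → R' :=
    Fin.snoc (fun i : Fin (n + 1) => (C (f i) : R')) (X Option.none) with hF
  set G : Fin (n + 2) → R' :=
    Fin.snoc (fun i : Fin (n + 1) =>
      (C (f i) - X (Option.some i) * X Option.none ^ d i : R')) (X Option.none) with hG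
  set c : Fin (n + 2) → R' :=
    Fin.snoc (fun i : Fin (n + 1) => X (Option.some i) * X Option.none ^ (d i - 1)) 0 with hc
  set lc : (Fin (n + 2) → R') →ₗ[R'] R' := (Pi.basisFun R' (Fin (n + 2))).constr R' c with hlc
  set P : (Fin (n + 2) → R') →ₗ[R'] (Fin (n + 2) → R') :=
    lc.smulRight (Pi.basisFun R' (Fin (n + 2)) (Fin.last (n + 1))) with hP
  have hclast : lc (Pi.basisFun R' (Fin (n + 2)) (Fin.last (n + 1))) = 0 := by
    rw [hlc, Module.Basis.constr_basis, hc, Fin.snoc_last]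
  have hPP : ∀ x, P (P x) = 0 := by
    intro x
    simp only [hP, LinearMap.smulRight_apply, map_smul, hclast, smul_eq_mul, mul_zero, zero_smul, smul_zero]
  have huv : (LinearMap.id - P) ∘ₗ (LinearMap.id + P) = LinearMap.id := by
    apply LinearMap.ext; intro x
    simp only [LinearMap.comp_apply, LinearMap.add_apply, LinearMap.sub_apply,
      LinearMap.id_apply, map_add, hPP]
    abel
  have hvu : (LinearMap.id + P) ∘ₗ (LinearMap.id - P) = LinearMap.id := by
    apply LinearMap.ext; intro x
    simp only [LinearMap.comp_apply, LinearMap.add_apply, LinearMap.sub_apply,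
      LinearMap.id_apply, map_sub, hPP]
    abel
  refine isKoszulRegular_of_comp F G (LinearMap.id - P) (LinearMap.id + P) huv hvu ?_ hreg
  apply Module.Basis.ext (Pi.basisFun R' (Fin (n + 2)))
  intro j
  rw [Module.Basis.constr_basis, LinearMap.comp_apply, LinearMap.sub_apply, LinearMap.id_apply,
    hP, LinearMap.smulRight_apply, hlc, Module.Basis.constr_basis, map_sub, map_smul,
    Module.Basis.constr_basis, Module.Basis.constr_basis]
  refine Fin.lastCases ?_ ?_ j
  · rw [hc, hF, hG, Fin.snoc_last, Fin.snoc_last, Fin.snoc_last, zero_smul, sub_zero]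
  · intro i
    rw [hc, hF, hG, Fin.snoc_castSucc, Fin.snoc_castSucc, Fin.snoc_castSucc, Fin.snoc_last,
      smul_eq_mul]
    congr 1
    rw [mul_assoc, ← pow_succ, Nat.sub_add_cancel (hd i)]
end

section
/- Let T be a triangulated category, let F be an object, and let ⟨F⟩ denote the smallest strictly full saturated triangulated subcategory containing F. Then for any object E, the following are equivalent: (i) Hom(F, E[r]) = 0 for all integers r; (ii) Hom(F', E) = 0 for all F' ∈ ⟨F⟩. -/
open CategoryTheory Limits Pretriangulated

variable {C : Type*} [Category C] [Preadditive C] [HasZeroObject C] [HasShift C ℤ]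
  [∀ n : ℤ, (shiftFunctor C n).Additive] [Pretriangulated C]

/-- A set of objects `P` of a pretriangulated category is *thick-closed* if it is closed
under isomorphisms, shifts, cones of distinguished triangles (so it underlies a strictly
full triangulated subcategory) and under direct summands (retracts), i.e. it is
*saturated*. -/
def IsThickClosed (P : Set C) : Prop :=
  (∀ X Y : C, (X ≅ Y) → X ∈ P → Y ∈ P) ∧
  (∀ (X : C) (n : ℤ), X ∈ P → (X⟦n⟧ ∈ P)) ∧
  (∀ T ∈ distTriang C, T.obj₁ ∈ P → T.obj₂ ∈ P → T.obj₃ ∈ P) ∧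
  (∀ X Z : C, Z ∈ P → ∀ (i : X ⟶ Z) (r : Z ⟶ X), i ≫ r = 𝟙 X → X ∈ P)

/-- The smallest strictly full saturated triangulated subcategory (as a set of objects)
containing a given set `S` of objects. -/
def thickClosure (S : Set C) : Set C :=
  {X | ∀ P : Set C, S ⊆ P → IsThickClosed P → X ∈ P}

/-! The objects `X` with `Hom(X, E⟦n⟧) = 0` for all `n` form a thick subcategory: it is closed
under shifts because `Hom(X⟦a⟧, Y) ≅ Hom(X, Y⟦-a⟧)`, under cones by the exactness of
`Hom(-, E⟦n⟧)` on distinguished triangles, and under retracts trivially. If it contains `F`, it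
contains `⟨F⟩`. Conversely `F⟦-r⟧ ∈ ⟨F⟩` and `Hom(F⟦-r⟧, E) ≅ Hom(F, E⟦r⟧)`. -/

section Shift

variable {D : Type*} [Category D] [Preadditive D] [HasShift D ℤ]
  [∀ n : ℤ, (shiftFunctor D n).Additive]

lemma forall_shift_hom_eq_zero_iff (X Y : D) {a b : ℤ} (h : a + b = 0) :
    (∀ φ : X⟦a⟧ ⟶ Y, φ = 0) ↔ ∀ ψ : X ⟶ Y⟦b⟧, ψ = 0 := by
  have : (shiftEquiv' D a b h).functor.Additive := inferInstanceAs (shiftFunctor D a).Additive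
  let e := (shiftEquiv' D a b h).toAdjunction.homAddEquiv X Y
  calc (∀ φ : X⟦a⟧ ⟶ Y, φ = 0) ↔ ∀ φ, e φ = 0 :=
        forall_congr' fun φ => (map_eq_zero_iff e e.injective).symm
    _ ↔ ∀ ψ : X ⟶ Y⟦b⟧, ψ = 0 := (e.surjective.forall (p := fun ψ => ψ = 0)).symm

def shiftsLeftOrthogonal (E : D) : Set D :=
  {X | ∀ (n : ℤ) (φ : X ⟶ E⟦n⟧), φ = 0}

lemma shift_mem_shiftsLeftOrthogonal {E X : D} (hX : X ∈ shiftsLeftOrthogonal E) (a : ℤ) :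
    X⟦a⟧ ∈ shiftsLeftOrthogonal E := by
  intro n
  rw [forall_shift_hom_eq_zero_iff X _ (add_neg_cancel a)]
  intro ψ
  exact (Preadditive.IsIso.comp_right_eq_zero ψ ((shiftFunctorAdd D n (-a)).inv.app E)).mp
    (hX _ _)

end Shift

lemma isThickClosed_shiftsLeftOrthogonal (E : C) : IsThickClosed (shiftsLeftOrthogonal E) := by
  refine ⟨?iso, fun X a hX => shift_mem_shiftsLeftOrthogonal hX a, ?cone, ?summand⟩
  case iso =>
    intro X Y e hX n φ
    exact (Preadditive.IsIso.comp_left_eq_zero e.hom φ).mp (hX n _)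
  case cone =>
    intro T hT h₁ h₂ n φ
    obtain ⟨ψ, rfl⟩ := Triangle.yoneda_exact₃ T hT φ (h₂ n _)
    rw [shift_mem_shiftsLeftOrthogonal h₁ 1 n ψ, comp_zero]
  case summand =>
    intro X Z hZ i r hir n φ
    rw [← Category.id_comp φ, ← hir, Category.assoc, hZ n (r ≫ φ), comp_zero]

/-- For objects `F`, `E` of a pretriangulated category `T`, the following
are equivalent: (i) `Hom(F, E[r]) = 0` for all `r ∈ ℤ`; (ii) `Hom(F', E) = 0` for all
`F'` in `⟨F⟩`, the smallest strictly full saturated triangulated subcategory containing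
`F`. -/
theorem hom_shift_vanishing_iff_thickClosure (F E : C) :
    (∀ r : ℤ, ∀ φ : F ⟶ E⟦r⟧, φ = 0) ↔
      (∀ F' ∈ thickClosure ({F} : Set C), ∀ φ : F' ⟶ E, φ = 0) := by
  constructor
  · intro hF F' hF' φ
    have hF'E : F' ∈ shiftsLeftOrthogonal E :=
      hF' _ (Set.singleton_subset_iff.mpr hF) (isThickClosed_shiftsLeftOrthogonal E)
    exact (Preadditive.IsIso.comp_right_eq_zero φ ((shiftFunctorZero C ℤ).inv.app E)).mp
      (hF'E 0 _)
  · intro h r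
    have hshift : F⟦-r⟧ ∈ thickClosure ({F} : Set C) := fun P hFP hP => hP.2.1 F (-r) (hFP rfl)
    exact (forall_shift_hom_eq_zero_iff F E (neg_add_cancel r)).mp (h _ hshift)
end

section
/- Let T' ⊆ T be an inclusion of triangulated subcategories, and let T = ⟨T_1, T_2⟩ be a semi-orthogonal decomposition of T with right adjoints R_i: T → T_i to the inclusions. If for each i the restriction of R_i to T' factors through T_i ∩ T', then T' = ⟨T' ∩ T_1, T' ∩ T_2⟩ is a semi-orthogonal decomposition of T'. -/
/-!
For `B ∈ T₂` the groups `Hom(B, X₁)` and `Hom(B, X₁⟦-1⟧)` vanish, so by the long exact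
`Hom(B, -)` sequence of the decomposition triangle `X₂ → X → X₁ → X₂⟦1⟧` the map `X₂ → X` is
bijective on maps out of `T₂`. It is therefore the counit of the coreflection `R₂`, i.e.
`X₂ ≅ R₂ X`, which lies in `T'` when `X` does; then `X₁ ∈ T'` as the cone of `X₂ → X`.
-/

open CategoryTheory Limits Pretriangulated

variable {C : Type*} [Category C] [Preadditive C] [HasZeroObject C] [HasShift C ℤ]
  [∀ n : ℤ, (shiftFunctor C n).Additive] [Pretriangulated C]

/-- A set of objects `P` of a pretriangulated category is *triangulated-closed* if it is
closed under isomorphisms, shifts and cones of distinguished triangles, so it underlies a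
strictly full triangulated subcategory. -/
def IsTriangClosed (P : Set C) : Prop :=
  (∀ X Y : C, (X ≅ Y) → X ∈ P → Y ∈ P) ∧
  (∀ (X : C) (n : ℤ), X ∈ P → (X⟦n⟧ ∈ P)) ∧
  (∀ T ∈ distTriang C, T.obj₁ ∈ P → T.obj₂ ∈ P → T.obj₃ ∈ P)

lemma CategoryTheory.Adjunction.isIso_homEquiv_of_bijective_comp {D E : Type*} [Category D]
    [Category E] {L : D ⥤ E} {R : E ⥤ D} (adj : L ⊣ R) [L.Full] [L.Faithful] {Y : D} {X : E}
    (f : L.obj Y ⟶ X) (hf : ∀ B : D, Function.Bijective fun g : L.obj B ⟶ L.obj Y => g ≫ f) :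
    IsIso (adj.homEquiv Y X f) := by
  refine isIso_of_yoneda_map_bijective _ fun B => ?_
  have hcomp : (fun g : B ⟶ Y => g ≫ adj.homEquiv Y X f) =
      adj.homEquiv B X ∘ (fun g : L.obj B ⟶ L.obj Y => g ≫ f) ∘ L.map := by
    funext g
    simp [Adjunction.homEquiv_naturality_left]
  rw [hcomp]
  exact (adj.homEquiv B X).bijective.comp
    ((hf B).comp ((Functor.FullyFaithful.ofFullyFaithful L).map_bijective B Y))

lemma CategoryTheory.Pretriangulated.bijective_comp_mor₁_of_distTriang {T : Triangle C}
    (hT : T ∈ distTriang C) {B : C} (h₃ : ∀ φ : B ⟶ T.obj₃, φ = 0)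
    (h₃' : ∀ φ : B ⟶ T.obj₃⟦(-1 : ℤ)⟧, φ = 0) :
    Function.Bijective fun g : B ⟶ T.obj₁ => g ≫ T.mor₁ := by
  constructor
  · intro g₁ g₂ hg
    have hsub : (g₁ - g₂) ≫ T.mor₁ = 0 := by rw [Preadditive.sub_comp, sub_eq_zero]; exact hg
    obtain ⟨v, hv⟩ := Triangle.coyoneda_exact₂ _ (inv_rot_of_distTriang _ hT) (g₁ - g₂) hsub
    rw [← sub_eq_zero, hv, h₃' v]
    exact zero_comp
  · intro x
    obtain ⟨g, hg⟩ := Triangle.coyoneda_exact₂ _ hT x (h₃ _)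
    exact ⟨g, hg.symm⟩

theorem sod_restricts_to_triangulated_subcategory_general
    (T₁ T₂ T' : Set C)
    (hT' : IsTriangClosed T') (hT₁ : IsTriangClosed T₁)
    (R₁ : C ⥤ ObjectProperty.FullSubcategory (· ∈ T₁)) (R₂ : C ⥤ ObjectProperty.FullSubcategory (· ∈ T₂))
    (adj₂ : ObjectProperty.ι (· ∈ T₂) ⊣ R₂)
    (hsemiorth : ∀ a ∈ T₁, ∀ b ∈ T₂, ∀ φ : b ⟶ a, φ = 0)
    (hdecomp : ∀ X : C,
      ∃ (X₁ X₂ : C) (_ : X₁ ∈ T₁) (_ : X₂ ∈ T₂) (f : X₂ ⟶ X) (g : X ⟶ X₁)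
        (h : X₁ ⟶ X₂⟦(1 : ℤ)⟧), Triangle.mk f g h ∈ distTriang C)
    (hfactor : ∀ X ∈ T', (R₁.obj X).obj ∈ T' ∧ (R₂.obj X).obj ∈ T') :
    (∀ a ∈ T₁ ∩ T', ∀ b ∈ T₂ ∩ T', ∀ φ : b ⟶ a, φ = 0) ∧
      ∀ X ∈ T',
        ∃ (X₁ X₂ : C) (_ : X₁ ∈ T₁ ∩ T') (_ : X₂ ∈ T₂ ∩ T') (f : X₂ ⟶ X) (g : X ⟶ X₁)
          (h : X₁ ⟶ X₂⟦(1 : ℤ)⟧), Triangle.mk f g h ∈ distTriang C := by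
  refine ⟨fun a ha b hb φ => hsemiorth a ha.1 b hb.1 φ, fun X hX => ?_⟩
  obtain ⟨X₁, X₂, hX₁, hX₂, f, g, h, hdist⟩ := hdecomp X
  have hf : ∀ B : ObjectProperty.FullSubcategory (· ∈ T₂),
      Function.Bijective fun u : B.obj ⟶ X₂ => u ≫ f := fun B =>
    bijective_comp_mor₁_of_distTriang hdist (hsemiorth X₁ hX₁ B.obj B.property)
      (hsemiorth _ (hT₁.2.1 X₁ (-1) hX₁) B.obj B.property)
  have := adj₂.isIso_homEquiv_of_bijective_comp (Y := ⟨X₂, hX₂⟩) f hf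
  have hX₂T' : X₂ ∈ T' := hT'.1 _ _
    ((ObjectProperty.ι _).mapIso (asIso (adj₂.homEquiv ⟨X₂, hX₂⟩ X f))).symm (hfactor X hX).2
  exact ⟨X₁, X₂, ⟨hX₁, hT'.2.2 _ hdist hX₂T' hX⟩, ⟨hX₂, hX₂T'⟩, f, g, h, hdist⟩

/-- Let `T' ⊆ T` be a triangulated subcategory and `T = ⟨T₁, T₂⟩` a
semi-orthogonal decomposition, with right adjoints `R₁, R₂` to the inclusions of the
(triangulated, right-admissible) pieces; every `X` sits in a distinguished triangle
`X₂ → X → X₁ → X₂⟦1⟧` with `Xᵢ ∈ Tᵢ` and `Hom(b, a) = 0` for `a ∈ T₁`, `b ∈ T₂`.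
If each `Rᵢ` restricted to `T'` factors through `Tᵢ ∩ T'`, then
`T' = ⟨T' ∩ T₁, T' ∩ T₂⟩` is a semi-orthogonal decomposition of `T'`: the semi-orthogonality
is inherited and every `X ∈ T'` sits in a distinguished triangle `X₂ → X → X₁ → X₂⟦1⟧`
with `X₁ ∈ T₁ ∩ T'` and `X₂ ∈ T₂ ∩ T'`. -/
theorem sod_restricts_to_triangulated_subcategory
    (T₁ T₂ T' : Set C)
    (hT' : IsTriangClosed T') (hT₁ : IsTriangClosed T₁) (hT₂ : IsTriangClosed T₂)
    (R₁ : C ⥤ ObjectProperty.FullSubcategory (· ∈ T₁)) (R₂ : C ⥤ ObjectProperty.FullSubcategory (· ∈ T₂))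
    (adj₁ : ObjectProperty.ι (· ∈ T₁) ⊣ R₁)
    (adj₂ : ObjectProperty.ι (· ∈ T₂) ⊣ R₂)
    (hsemiorth : ∀ a ∈ T₁, ∀ b ∈ T₂, ∀ φ : b ⟶ a, φ = 0)
    (hdecomp : ∀ X : C,
      ∃ (X₁ X₂ : C) (_ : X₁ ∈ T₁) (_ : X₂ ∈ T₂) (f : X₂ ⟶ X) (g : X ⟶ X₁)
        (h : X₁ ⟶ X₂⟦(1 : ℤ)⟧), Triangle.mk f g h ∈ distTriang C)
    (hfactor : ∀ X ∈ T', (R₁.obj X).obj ∈ T' ∧ (R₂.obj X).obj ∈ T') :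
    (∀ a ∈ T₁ ∩ T', ∀ b ∈ T₂ ∩ T', ∀ φ : b ⟶ a, φ = 0) ∧
      ∀ X ∈ T',
        ∃ (X₁ X₂ : C) (_ : X₁ ∈ T₁ ∩ T') (_ : X₂ ∈ T₂ ∩ T') (f : X₂ ⟶ X) (g : X ⟶ X₁)
          (h : X₁ ⟶ X₂⟦(1 : ℤ)⟧), Triangle.mk f g h ∈ distTriang C :=
  sod_restricts_to_triangulated_subcategory_general T₁ T₂ T' hT' hT₁ R₁ R₂ adj₂ hsemiorth hdecomp
    hfactor
end

section
/- Let T be a triangulated category with a generator F, and let T_1, ..., T_r be a semi-orthogonal sequence of full triangulated subcategories. Then the sequence is full (i.e., a semi-orthogonal decomposition of T) if and only if the triangulated hull of T_1, ..., T_r contains F. -/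
/-!
Right admissibility of `Tᵢ` provides, for every `Y`, a distinguished triangle
`A → Y → Z → A[1]` with `A ∈ Tᵢ` (via the counit of the adjunction) and `Z` right orthogonal
to `Tᵢ`. Peeling off `T_r, …, T_1` in turn from an object `X`, semi-orthogonality keeps `Z`
right orthogonal to the components already peeled off, so `X` lies in the hull as soon as
every object right orthogonal to all `Tᵢ` does. Such an object is right orthogonal, together
with all its shifts, to the whole hull; if the hull contains the generator `F`, it is zero.
-/

open CategoryTheory Limits Pretriangulated ObjectProperty

variable {C : Type*} [Category C] [Preadditive C] [HasZeroObject C] [HasShift C ℤ]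
  [∀ n : ℤ, (shiftFunctor C n).Additive] [Pretriangulated C]

/-- The *triangulated hull*: the smallest strictly full triangulated subcategory (as a set
of objects) containing a given set `S` of objects. -/
def triangHull (S : Set C) : Set C :=
  {X | ∀ P : Set C, S ⊆ P → IsTriangClosed P → X ∈ P}

lemma subset_triangHull (S : Set C) : S ⊆ triangHull S :=
  fun _ hX _ hSP _ => hSP hX

lemma triangHull_subset {S P : Set C} (hSP : S ⊆ P) (hP : IsTriangClosed P) :
    triangHull S ⊆ P :=
  fun _ hX => hX P hSP hP

lemma isTriangClosed_triangHull (S : Set C) : IsTriangClosed (triangHull S) :=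
  ⟨fun X Y e hX P hSP hP => hP.1 X Y e (hX P hSP hP),
    fun X n hX P hSP hP => hP.2.1 X n (hX P hSP hP),
    fun T hT h₁ h₂ P hSP hP => hP.2.2 T hT (h₁ P hSP hP) (h₂ P hSP hP)⟩

lemma IsTriangClosed.isStableUnderShift {S : Set C} (hS : IsTriangClosed S) :
    IsStableUnderShift (· ∈ S) ℤ where
  isStableUnderShiftBy n := ⟨fun X hX => hS.2.1 X n hX⟩

lemma IsTriangClosed.mem_of_isZero {P : Set C} (hP : IsTriangClosed P) {F Z : C} (hF : F ∈ P)
    (hZ : IsZero Z) : Z ∈ P :=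
  hP.1 _ _ ((isZero_zero C).iso hZ) (hP.2.2 _ (contractible_distinguished F) hF hF)

lemma isTriangClosed_setOf (P : ObjectProperty C) [P.IsClosedUnderIsomorphisms]
    [P.IsTriangulated] : IsTriangClosed {X | P X} :=
  ⟨fun _ _ e hX => P.prop_of_iso e hX, fun X n hX => P.le_shift n X hX,
    fun T hT h₁ h₂ => P.ext_of_isTriangulatedClosed₃ T hT h₁ h₂⟩

instance isStableUnderShift_iUnion {J : Sort*} (S : J → Set C)
    [∀ i, IsStableUnderShift (· ∈ S i) ℤ] : IsStableUnderShift (· ∈ ⋃ i, S i) ℤ where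
  isStableUnderShiftBy n := ⟨fun X hX => by
    obtain ⟨i, hi⟩ := Set.mem_iUnion.1 hX
    exact Set.mem_iUnion.2 ⟨i, le_shift _ n X hi⟩⟩

lemma triangHull_subset_leftOrthogonal_rightOrthogonal (S : Set C)
    [IsStableUnderShift (· ∈ S) ℤ] :
    triangHull S ⊆ {X | (rightOrthogonal (· ∈ S)).leftOrthogonal X} :=
  triangHull_subset (fun _ hX _ f hY => hY f hX) (isTriangClosed_setOf _)

lemma ObjectProperty.bijective_comp_counit {D : Type*} [Category D] (P : ObjectProperty D)
    [P.ι.IsLeftAdjoint] (Y : D) ⦃X : D⦄ (hX : P X) :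
    Function.Bijective fun ψ : X ⟶ (P.ι.rightAdjoint.obj Y).obj =>
      ψ ≫ (Adjunction.ofIsLeftAdjoint P.ι).counit.app Y := by
  let adj := Adjunction.ofIsLeftAdjoint P.ι
  have h : (fun ψ : X ⟶ (P.ι.rightAdjoint.obj Y).obj => ψ ≫ adj.counit.app Y) =
      (adj.homEquiv ⟨X, hX⟩ Y).symm ∘
        (P.fullyFaithfulι.homEquiv (X := ⟨X, hX⟩) (Y := P.ι.rightAdjoint.obj Y)).symm := by
    funext ψ
    rw [Function.comp_apply, Adjunction.homEquiv_counit]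
    rfl
  rw [h]
  exact (Equiv.bijective _).comp (Equiv.bijective _)

lemma injective_comp_shift_map {D : Type*} [Category D] [HasShift D ℤ] {A Y : D} (c : A ⟶ Y)
    (n : ℤ) {B : D} (hc : Function.Injective fun ψ : B⟦-n⟧ ⟶ A => ψ ≫ c) :
    Function.Injective fun ψ : B ⟶ A⟦n⟧ => ψ ≫ c⟦n⟧' := by
  let adj := (shiftEquiv D n).symm.toAdjunction
  intro ψ₁ ψ₂ h
  obtain ⟨χ₁, rfl⟩ := (adj.homEquiv B A).surjective ψ₁
  obtain ⟨χ₂, rfl⟩ := (adj.homEquiv B A).surjective ψ₂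
  have : adj.homEquiv B Y (χ₁ ≫ c) = adj.homEquiv B Y (χ₂ ≫ c) := by
    rw [Adjunction.homEquiv_naturality_right, Adjunction.homEquiv_naturality_right]
    exact h
  rw [hc ((adj.homEquiv B Y).injective this)]

lemma exists_distTriang_mem_rightOrthogonal (S : Set C) [IsStableUnderShift (· ∈ S) ℤ]
    [(ι (· ∈ S)).IsLeftAdjoint] (Y : C) :
    ∃ (A Z : C) (c : A ⟶ Y) (g : Y ⟶ Z) (h : Z ⟶ A⟦(1 : ℤ)⟧),
      Triangle.mk c g h ∈ distTriang C ∧ A ∈ S ∧ rightOrthogonal (· ∈ S) Z := by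
  let A := ((ι (· ∈ S)).rightAdjoint.obj Y).obj
  let c : A ⟶ Y := (Adjunction.ofIsLeftAdjoint (ι (· ∈ S))).counit.app Y
  have hc := ObjectProperty.bijective_comp_counit (· ∈ S) Y
  obtain ⟨Z, g, h, hT⟩ := distinguished_cocone_triangle c
  have hcg : c ≫ g = 0 := comp_distTriang_mor_zero₁₂ _ hT
  have hhc : h ≫ c⟦(1 : ℤ)⟧' = 0 := comp_distTriang_mor_zero₃₁ _ hT
  refine ⟨A, Z, c, g, h, hT, ((ι (· ∈ S)).rightAdjoint.obj Y).property, fun B φ hB => ?_⟩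
  have hφh : φ ≫ h = 0 := by
    refine injective_comp_shift_map c 1 (hc (le_shift (· ∈ S) (-1 : ℤ) B hB)).injective ?_
    simp only [Category.assoc, hhc, comp_zero, zero_comp]
  obtain ⟨ψ, rfl⟩ := Triangle.coyoneda_exact₃ _ hT φ hφh
  obtain ⟨χ, rfl⟩ := (hc hB).surjective ψ
  change (χ ≫ c) ≫ g = 0
  rw [Category.assoc, hcg, comp_zero]

lemma mem_of_rightOrthogonal_of_semiorthogonal {r : ℕ} {S : Fin r → Set C}
    [∀ i, IsStableUnderShift (· ∈ S i) ℤ] [∀ i, (ι (· ∈ S i)).IsLeftAdjoint]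
    (hsemiorth : ∀ i j : Fin r, i < j → ∀ a ∈ S i, ∀ b ∈ S j, ∀ φ : b ⟶ a, φ = 0)
    {H : Set C} (hH : IsTriangClosed H) (hSH : ∀ i, S i ⊆ H)
    (hbase : ∀ Y, (∀ i, rightOrthogonal (· ∈ S i) Y) → Y ∈ H) :
    ∀ k ≤ r, ∀ Y, (∀ i : Fin r, k ≤ i → rightOrthogonal (· ∈ S i) Y) → Y ∈ H := by
  intro k
  induction k with
  | zero => exact fun _ Y hY => hbase Y fun i => hY i (Nat.zero_le _)
  | succ k ih =>
    intro hk Y hY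
    let i₀ : Fin r := ⟨k, hk⟩
    obtain ⟨A, Z, c, g, h, hT, hA, hZ⟩ := exists_distTriang_mem_rightOrthogonal (S i₀) Y
    have hZ' : ∀ i : Fin r, k ≤ i → rightOrthogonal (· ∈ S i) Z := by
      intro i hi
      rcases hi.eq_or_lt with hik | hik
      · rwa [show i = i₀ from Fin.ext hik.symm]
      · have hA₁ : rightOrthogonal (· ∈ S i) (A⟦(1 : ℤ)⟧) := fun B f hB =>
          hsemiorth i₀ i hik _ (le_shift (· ∈ S i₀) (1 : ℤ) A hA) B hB f
        exact ext_of_isTriangulatedClosed₂ _ _ (rot_of_distTriang _ hT) (hY i hik) hA₁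
    have hZH : Z ∈ H := ih (Nat.le_of_succ_le hk) Z hZ'
    exact hH.2.2 _ (inv_rot_of_distTriang _ hT) (hH.2.1 Z (-1) hZH) (hSH i₀ hA)

lemma isZero_of_rightOrthogonal {F : C}
    (hF : ∀ E : C, (∀ r : ℤ, ∀ φ : F ⟶ E⟦r⟧, φ = 0) → IsZero E)
    {S : Set C} [IsStableUnderShift (· ∈ S) ℤ] (hFS : F ∈ triangHull S) {Y : C}
    (hY : rightOrthogonal (· ∈ S) Y) : IsZero Y :=
  hF Y fun n φ => triangHull_subset_leftOrthogonal_rightOrthogonal S hFS φ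
    (le_shift _ n Y hY)

/-- Let `T` be a triangulated category with a generator `F` and let
`T_1, ..., T_r` be a semi-orthogonal sequence of full triangulated subcategories: each
`T_i` is triangulated, right-admissible (its inclusion admits a right adjoint, i.e. is a
left adjoint), and `Hom(F_j, F_i) = 0` for `i < j`, `F_i ∈ T_i`, `F_j ∈ T_j`.  Then the
sequence is full (the triangulated hull of the `T_i` is all of `T`) if and only if that
hull contains `F`. -/
theorem semiorthogonal_full_iff_generator_mem (F : C)
    (hF : ∀ E : C, (∀ r : ℤ, ∀ φ : F ⟶ E⟦r⟧, φ = 0) → IsZero E)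
    (r : ℕ) (S : Fin r → Set C)
    (htri : ∀ i, IsTriangClosed (S i))
    (hadm : ∀ i, (ObjectProperty.ι (· ∈ S i)).IsLeftAdjoint)
    (hsemiorth : ∀ i j : Fin r, i < j → ∀ a ∈ S i, ∀ b ∈ S j, ∀ φ : b ⟶ a, φ = 0) :
    (∀ X : C, X ∈ triangHull (⋃ i, S i)) ↔ F ∈ triangHull (⋃ i, S i) := by
  refine ⟨fun hfull => hfull F, fun hFS X => ?_⟩
  have := fun i => (htri i).isStableUnderShift
  have hhull := isTriangClosed_triangHull (⋃ i, S i)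
  refine mem_of_rightOrthogonal_of_semiorthogonal hsemiorth hhull
    (fun i => (Set.subset_iUnion S i).trans (subset_triangHull _)) (fun Y hY => ?_) r le_rfl X
    (fun i hi => absurd i.isLt (not_lt.2 hi))
  refine hhull.mem_of_isZero hFS (isZero_of_rightOrthogonal hF hFS fun B f hB => ?_)
  obtain ⟨i, hi⟩ := Set.mem_iUnion.1 hB
  exact hY i f hi
end

section
/- Let A be a commutative ring, f_0, ..., f_n a Koszul-regular sequence in A, and d_0, ..., d_n positive integers. Set S = A[t, x_0, ..., x_n] and B = S/(f_0 - x_0·t^{d_0}, ..., f_n - x_n·t^{d_n}). Then t is a nonzerodivisor in B, and B/(t) ≅ (A/(f_0, ..., f_n))[x_0, ..., x_n]. -/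
set_option maxHeartbeats 1000000
set_option synthInstance.maxHeartbeats 400000

open MvPolynomial

/-- The ideal of `S = A[t, x_0, ..., x_n]` generated by the elements
`f_i - x_i·t^{d_i}`, where `S` is realized as `MvPolynomial (Option (Fin (n+1))) A` with
`X none = t` and `X (some i) = x_i`. -/
noncomputable def weightedReesIdeal {A : Type*} [CommRing A] {n : ℕ} (f : Fin (n + 1) → A)
    (d : Fin (n + 1) → ℕ) : Ideal (MvPolynomial (Option (Fin (n + 1))) A) :=
  Ideal.span (Set.range fun i : Fin (n + 1) =>
    (C (f i) - X (Option.some i) * X Option.none ^ d i :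
      MvPolynomial (Option (Fin (n + 1))) A))

/-- `B = S/(f_0 - x_0 t^{d_0}, ..., f_n - x_n t^{d_n})`. -/
abbrev weightedReesQuotient {A : Type*} [CommRing A] {n : ℕ} (f : Fin (n + 1) → A)
    (d : Fin (n + 1) → ℕ) : Type _ :=
  MvPolynomial (Option (Fin (n + 1))) A ⧸ weightedReesIdeal f d

/-!
Setting `t = 0` maps `S = A[t, x]` onto `A[x]` with kernel `(t)` and sends
`q_i = f_i - x_i t^{d_i}` to `f_i`. Vanishing of the first Koszul homology says that every syzygy
of `f` is a combination of the Koszul syzygies `f_j e_i - f_i e_j`, and this persists in `A[x]`,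
coefficient by coefficient. Now if `t g = Σ h_i q_i`, the reductions of the `h_i` mod `t` form a
syzygy of the `f_i` over `A[x]`; lifting it to the corresponding Koszul syzygy of the `q_i` and
subtracting, we may assume every `h_i` is divisible by `t`, and cancelling the nonzerodivisor `t`
in `S` gives `g ∈ (q)`. For the quotient, `B/(t) = S/(q, t) = A[x]/(f) = (A/(f))[x]`.
-/

open Matrix

/-- Vanishing of the first Koszul homology of `f`: writing `e_i` for the standard basis,
`(B - Bᵀ) *ᵥ f = Σ_{i,j} B i j • (f_j e_i - f_i e_j)` runs over the combinations of Koszul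
syzygies. -/
def HasOnlyKoszulSyzygies {R η : Type*} [CommRing R] [Fintype η] (f : η → R) : Prop :=
  ∀ c : η → R, c ⬝ᵥ f = 0 → ∃ B : Matrix η η R, c = (B - Bᵀ) *ᵥ f

theorem sub_transpose_mulVec_dotProduct_self {R η : Type*} [CommRing R] [Fintype η]
    (B : Matrix η η R) (v : η → R) : (B - Bᵀ) *ᵥ v ⬝ᵥ v = 0 := by
  rw [sub_mulVec, sub_dotProduct, mulVec_transpose, ← dotProduct_mulVec, dotProduct_comm,
    sub_self]

theorem Pi.basisFun_constr_apply_eq_dotProduct {R η : Type*} [CommRing R] [Fintype η]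
    (f v : η → R) : (Pi.basisFun R η).constr R f v = v ⬝ᵥ f := by
  simp [Module.Basis.constr_apply_fintype, dotProduct]

open ExteriorAlgebra in
theorem exists_contractLeft_eq_ι_of_mem_exteriorPower_two {R η : Type*} [CommRing R]
    [Fintype η] (f : η → R) {y : ExteriorAlgebra R (η → R)}
    (hy : y ∈ ⋀[R]^2 (η → R)) :
    ∃ B : Matrix η η R,
      CliffordAlgebra.contractLeft ((Pi.basisFun R η).constr R f) y =
        ι R ((B - Bᵀ) *ᵥ f) := by
  let K : Matrix η η R →ₗ[R] (η → R) :=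
    { toFun := fun B => (B - Bᵀ) *ᵥ f
      map_add' := fun B C => by simp only [transpose_add, add_sub_add_comm, add_mulVec]
      map_smul' := fun r B => by simp [transpose_smul, ← smul_sub, smul_mulVec] }
  suffices ⋀[R]^2 (η → R) ≤ (LinearMap.range (ι R ∘ₗ K)).comap
      (CliffordAlgebra.contractLeft ((Pi.basisFun R η).constr R f)) by
    obtain ⟨B, hB⟩ := this hy
    exact ⟨B, hB.symm⟩
  rw [← ιMulti_span_fixedDegree, Submodule.span_le]
  rintro _ ⟨v, rfl⟩
  -- `v 0 ∧ v 1` contracts to `(v 0 ⬝ᵥ f) • v 1 - (v 1 ⬝ᵥ f) • v 0`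
  refine ⟨vecMulVec (v 1) (v 0), ?_⟩
  have hv : ιMulti R 2 v = ι R (v 0) * ι R (v 1) := by simp [ιMulti_apply]; rfl
  simp only [LinearMap.comp_apply, LinearMap.coe_mk, AddHom.coe_mk, K, hv,
    CliffordAlgebra.contractLeft_ι_mul, CliffordAlgebra.contractLeft_ι,
    Pi.basisFun_constr_apply_eq_dotProduct]
  rw [← Algebra.commutes, ← Algebra.smul_def, ← map_smul, ← map_smul, ← map_sub,
    sub_mulVec, transpose_vecMulVec, vecMulVec_mulVec, vecMulVec_mulVec, op_smul_eq_smul,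
    op_smul_eq_smul]

theorem IsKoszulRegular.hasOnlyKoszulSyzygies {R : Type*} [CommRing R] {m : ℕ} {f : Fin m → R}
    (hf : IsKoszulRegular f) : HasOnlyKoszulSyzygies f := by
  intro c hc
  have hc1 : ExteriorAlgebra.ι R c ∈ ⋀[R]^1 (Fin m → R) :=
    (pow_one (LinearMap.range (ExteriorAlgebra.ι R))).ge (LinearMap.mem_range_self _ c)
  obtain ⟨y, hy, hyc⟩ := hf 1 one_pos _ hc1 (by
    rw [CliffordAlgebra.contractLeft_ι, Pi.basisFun_constr_apply_eq_dotProduct, hc, map_zero])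
  obtain ⟨B, hB⟩ := exists_contractLeft_eq_ι_of_mem_exteriorPower_two f hy
  exact ⟨B, (ExteriorAlgebra.ι_inj R _ _).mp (hyc.symm.trans hB)⟩

theorem MvPolynomial.coeff_dotProduct_C {A η σ : Type*} [CommRing A] [Fintype η]
    (c : η → MvPolynomial σ A) (f : η → A) (μ : σ →₀ ℕ) :
    coeff μ (c ⬝ᵥ fun i => C (f i)) = (fun i => coeff μ (c i)) ⬝ᵥ f := by
  simp only [dotProduct, coeff_sum, mul_comm _ (C _), coeff_C_mul, mul_comm (f _)]

theorem HasOnlyKoszulSyzygies.mvPolynomial_C {A η σ : Type*} [CommRing A] [Fintype η]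
    {f : η → A} (hf : HasOnlyKoszulSyzygies f) :
    HasOnlyKoszulSyzygies fun i => (C (f i) : MvPolynomial σ A) := by
  classical
  intro c hc
  choose B hB using fun μ =>
    hf _ ((coeff_dotProduct_C c f μ).symm.trans (by rw [hc, coeff_zero]))
  let T := Finset.univ.biUnion fun i => (c i).support
  refine ⟨∑ μ ∈ T, (B μ).map (monomial μ), ?_⟩
  funext i; ext ν
  have hcoeff : ∀ j k, coeff ν ((∑ μ ∈ T, (B μ).map (monomial μ)) j k) =
      if ν ∈ T then B ν j k else 0 := fun j k => by
    simp [Matrix.sum_apply, coeff_sum, coeff_monomial]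
  rw [mulVec, coeff_dotProduct_C]
  simp only [Matrix.sub_apply, transpose_apply, coeff_sub, hcoeff]
  split_ifs with hν
  · exact congrFun (hB ν) i
  · simp only [T, Finset.mem_biUnion, Finset.mem_univ, mem_support_iff, true_and, not_exists,
      not_not] at hν
    simp [hν]

theorem mem_span_range_of_mul_mem {S R η : Type*} [CommRing S] [CommRing R] [Fintype η]
    (π : S →+* R) (hπ : Function.Surjective π) {t : S} (ht : IsLeftRegular t)
    (hker : RingHom.ker π = Ideal.span {t}) {q : η → S} (hq : HasOnlyKoszulSyzygies (π ∘ q))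
    {g : S} (hg : t * g ∈ Ideal.span (Set.range q)) : g ∈ Ideal.span (Set.range q) := by
  obtain ⟨h, hh⟩ := Ideal.mem_span_range_iff_exists_fun.mp hg
  have hπt : π t = 0 := by rw [← RingHom.mem_ker, hker]; exact Ideal.mem_span_singleton_self t
  obtain ⟨B, hB⟩ := hq (π ∘ h) (by simpa [dotProduct, hπt] using congrArg π hh)
  obtain ⟨B, rfl⟩ : ∃ B' : Matrix η η S, B'.map π = B :=
    ⟨B.map (Function.surjInv hπ), by ext; simp [Function.surjInv_eq hπ]⟩
  have hdvd : ∀ i, t ∣ (h - (B - Bᵀ) *ᵥ q) i := fun i => by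
    rw [← Ideal.mem_span_singleton, ← hker, RingHom.mem_ker, Pi.sub_apply, map_sub,
      RingHom.map_mulVec, Matrix.map_sub _ (map_sub π), transpose_map, ← congrFun hB i,
      Function.comp_apply, sub_self]
  choose k hk using hdvd
  have htg : t * g = t * (k ⬝ᵥ q) := calc
    t * g = h ⬝ᵥ q := hh.symm
    _ = (h - (B - Bᵀ) *ᵥ q) ⬝ᵥ q := by
      rw [sub_dotProduct, sub_transpose_mulVec_dotProduct_self, sub_zero]
    _ = t * (k ⬝ᵥ q) := by simp only [dotProduct, hk, Finset.mul_sum, mul_assoc]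
  rw [ht htg]
  exact Ideal.mem_span_range_iff_exists_fun.mpr ⟨k, rfl⟩

namespace MvPolynomial

variable (σ A : Type*) [CommRing A]

noncomputable def evalNoneAtZero : MvPolynomial (Option σ) A →+* MvPolynomial σ A :=
  (Polynomial.evalRingHom 0).comp (optionEquivLeft A σ).toRingEquiv.toRingHom

variable {σ A}

@[simp]
theorem evalNoneAtZero_C (a : A) : evalNoneAtZero σ A (C a) = C a := by
  simp [evalNoneAtZero]

@[simp]
theorem evalNoneAtZero_X_some (i : σ) : evalNoneAtZero σ A (X (some i)) = X i := by
  simp [evalNoneAtZero]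

@[simp]
theorem evalNoneAtZero_X_none : evalNoneAtZero σ A (X none) = 0 := by
  simp [evalNoneAtZero]

theorem evalNoneAtZero_surjective : Function.Surjective (evalNoneAtZero σ A) :=
  fun p => ⟨(optionEquivLeft A σ).symm (Polynomial.C p), by simp [evalNoneAtZero]⟩

theorem ker_evalNoneAtZero : RingHom.ker (evalNoneAtZero σ A) = Ideal.span {X none} := by
  ext p
  rw [RingHom.mem_ker, Ideal.mem_span_singleton, ← map_dvd_iff (optionEquivLeft A σ),
    optionEquivLeft_X_none, Polynomial.X_dvd_iff, Polynomial.coeff_zero_eq_eval_zero]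
  rfl

end MvPolynomial

section DoubleQuotient

variable {S T : Type*} [CommRing S] [CommRing T] (I : Ideal S) (s : S) (Φ : S →+* T)
  (hΦ : Function.Surjective Φ) (hker : RingHom.ker Φ = I ⊔ Ideal.span {s})

noncomputable def quotQuotSpanEquivOfKerEq :
    (S ⧸ I) ⧸ Ideal.span {Ideal.Quotient.mk I s} ≃+* T :=
  ((Ideal.quotEquivOfEq (by rw [Ideal.map_span, Set.image_singleton])).trans
    (DoubleQuot.quotQuotEquivQuotSup I (Ideal.span {s}))).trans
    ((Ideal.quotEquivOfEq hker.symm).trans (RingHom.quotientKerEquivOfSurjective hΦ))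

@[simp]
theorem quotQuotSpanEquivOfKerEq_mk_mk (p : S) :
    quotQuotSpanEquivOfKerEq I s Φ hΦ hker (Ideal.Quotient.mk _ (Ideal.Quotient.mk I p)) = Φ p :=
  rfl

end DoubleQuotient

section WeightedRees

variable {A : Type*} [CommRing A] {n : ℕ} (f : Fin (n + 1) → A) (d : Fin (n + 1) → ℕ)

noncomputable def weightedReesGenerators (i : Fin (n + 1)) :
    MvPolynomial (Option (Fin (n + 1))) A :=
  C (f i) - X (some i) * X none ^ d i

theorem weightedReesIdeal_eq_span :
    weightedReesIdeal f d = Ideal.span (Set.range (weightedReesGenerators f d)) :=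
  rfl

variable {d}

theorem evalNoneAtZero_comp_weightedReesGenerators (hd : ∀ i, 0 < d i) :
    evalNoneAtZero _ A ∘ weightedReesGenerators f d = fun i => C (f i) := by
  ext1 i
  simp [weightedReesGenerators, (hd i).ne']

theorem ker_map_comp_evalNoneAtZero (hd : ∀ i, 0 < d i) :
    RingHom.ker ((map (Ideal.Quotient.mk (Ideal.span (Set.range f)))).comp
      (evalNoneAtZero _ A)) = weightedReesIdeal f d ⊔ Ideal.span {X none} := by
  have hmap : (weightedReesIdeal f d).map (evalNoneAtZero _ A) =
      (Ideal.span (Set.range f)).map C := by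
    rw [weightedReesIdeal_eq_span, Ideal.map_span, Ideal.map_span, ← Set.range_comp,
      ← Set.range_comp, evalNoneAtZero_comp_weightedReesGenerators f hd]
    rfl
  rw [← RingHom.comap_ker, ker_map, Ideal.mk_ker, ← hmap,
    Ideal.comap_map_of_surjective _ evalNoneAtZero_surjective, ← RingHom.ker_eq_comap_bot,
    ker_evalNoneAtZero]

end WeightedRees

/-- Let `f_0, ..., f_n` be a Koszul-regular sequence in `A` and
`d_0, ..., d_n` positive integers.  In `B = A[t, x]/(f_i - x_i t^{d_i})`, the image of `t`
is a nonzerodivisor, and `B/(t) ≅ (A/(f_0, ..., f_n))[x_0, ..., x_n]` by a ring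
isomorphism compatible with `A` and sending `x_i` to `x_i`. -/
theorem t_regular_and_quotient_iso {A : Type*} [CommRing A] {n : ℕ}
    (f : Fin (n + 1) → A) (d : Fin (n + 1) → ℕ) (hd : ∀ i, 0 < d i)
    (hf : IsKoszulRegular f) :
    (∀ b : weightedReesQuotient f d,
      Ideal.Quotient.mk (weightedReesIdeal f d) (X Option.none) * b = 0 → b = 0) ∧
    ∃ e : (weightedReesQuotient f d ⧸
          Ideal.span {Ideal.Quotient.mk (weightedReesIdeal f d) (X Option.none)}) ≃+*
        MvPolynomial (Fin (n + 1)) (A ⧸ Ideal.span (Set.range f)),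
      (∀ a : A,
        e (Ideal.Quotient.mk _
            (Ideal.Quotient.mk (weightedReesIdeal f d) (C a))) =
          C (Ideal.Quotient.mk (Ideal.span (Set.range f)) a)) ∧
      ∀ i : Fin (n + 1),
        e (Ideal.Quotient.mk _
            (Ideal.Quotient.mk (weightedReesIdeal f d) (X (Option.some i)))) = X i := by
  have hq : HasOnlyKoszulSyzygies (evalNoneAtZero _ A ∘ weightedReesGenerators f d) := by
    rw [evalNoneAtZero_comp_weightedReesGenerators f hd]
    exact hf.hasOnlyKoszulSyzygies.mvPolynomial_C
  have hΦ := (map_surjective _ (Ideal.Quotient.mk_surjective (I := Ideal.span (Set.range f)))).comp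
    (evalNoneAtZero_surjective (σ := Fin (n + 1)))
  refine ⟨fun b hb => ?_,
    quotQuotSpanEquivOfKerEq _ _ _ hΦ (ker_map_comp_evalNoneAtZero f hd),
    fun a => by simp, fun i => by simp⟩
  obtain ⟨g, rfl⟩ := Ideal.Quotient.mk_surjective b
  rw [← map_mul, Ideal.Quotient.eq_zero_iff_mem] at hb
  rw [Ideal.Quotient.eq_zero_iff_mem]
  exact mem_span_range_of_mul_mem _ evalNoneAtZero_surjective isRegular_X.left
    ker_evalNoneAtZero hq hb
end
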